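/- Let K(θ,θ′) be a nonnegative function on Θ × Θ such that √K satisfies √K(θ₁,θ₃) ≤ a·(√K(θ₁,θ₂) + √K(θ₂,θ₃)) for some a ≥ 1 and all θ₁,θ₂,θ₃ ∈ Θ. Suppose a sequence θ̂⁽¹⁾, …, θ̂⁽ᴷ⁾ in Θ and positive reals N₁ ≤ N₂ ≤ … ≤ N_K satisfy N_k·K(θ̂⁽ᵏ⁾, θ̂⁽ᵏ⁻¹⁾) ≤ z for all k = 2, …, K, and N_{k}/N_{k-1} ≥ u₀ > 1 for all k. Then for any 1 ≤ m ≤ K, √K(θ̂⁽ᴷ⁾, θ̂⁽ᵐ⁾) ≤ √(z/N_m) · Σ_{j=0}^{K−m−1} a^{j+1}·u₀^{−j/2}; in particular, if a < √u₀, then N_m·K(θ̂⁽ᴷ⁾, θ̂⁽ᵐ⁾) ≤ z·a²/(1 − a/√u₀)². -/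
import Mathlib


open Real Finset

/-- Oracle propagation bound for stagewise aggregation: if `√K` satisfies a
quasi-triangle inequality with constant `a ≥ 1`, `K(θ,θ) = 0`, the scales grow
geometrically (`N_k / N_{k-1} ≥ u₀ > 1`) and consecutive estimates satisfy
`N_k · K(θ̂⁽ᵏ⁾, θ̂⁽ᵏ⁻¹⁾) ≤ z`, then for every `1 ≤ m ≤ K`,
`√K(θ̂⁽ᴷ⁾, θ̂⁽ᵐ⁾) ≤ √(z/N_m) · ∑_{j=0}^{K-m-1} a^{j+1} u₀^{-j/2}`; and if
`a < √u₀` then `N_m · K(θ̂⁽ᴷ⁾, θ̂⁽ᵐ⁾) ≤ z a² / (1 - a/√u₀)²`. -/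
theorem stagewise_oracle_propagation {Θ : Type*} (K : Θ → Θ → ℝ)
    (hKnn : ∀ θ θ', 0 ≤ K θ θ') (hKself : ∀ θ, K θ θ = 0)
    (a : ℝ) (ha : 1 ≤ a)
    (htri : ∀ θ₁ θ₂ θ₃, Real.sqrt (K θ₁ θ₃) ≤
        a * (Real.sqrt (K θ₁ θ₂) + Real.sqrt (K θ₂ θ₃)))
    (Kmax : ℕ) (est : ℕ → Θ) (Nn : ℕ → ℝ)
    (hNpos : ∀ k, 1 ≤ k → k ≤ Kmax → 0 < Nn k)
    (u₀ : ℝ) (hu₀ : 1 < u₀)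
    (hratio : ∀ k, 2 ≤ k → k ≤ Kmax → u₀ ≤ Nn k / Nn (k - 1))
    (z : ℝ) (hz : 0 ≤ z)
    (hrec : ∀ k, 2 ≤ k → k ≤ Kmax → Nn k * K (est k) (est (k - 1)) ≤ z) :
    ∀ m, 1 ≤ m → m ≤ Kmax →
      (Real.sqrt (K (est Kmax) (est m)) ≤
        Real.sqrt (z / Nn m) *
          ∑ j ∈ Finset.range (Kmax - m), a ^ (j + 1) * u₀ ^ (-(j : ℝ) / 2)) ∧
      (a < Real.sqrt u₀ →
        Nn m * K (est Kmax) (est m) ≤ z * a ^ 2 / (1 - a / Real.sqrt u₀) ^ 2) := by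
  have hu0 : (0:ℝ) < u₀ := lt_trans one_pos hu₀
  have hsu : (1:ℝ) < Real.sqrt u₀ := by
    rw [show (1:ℝ) = Real.sqrt 1 by simp]
    exact Real.sqrt_lt_sqrt (by norm_num) hu₀
  have hsu0 : (0:ℝ) < Real.sqrt u₀ := lt_trans one_pos hsu
  have ha0 : (0:ℝ) < a := lt_of_lt_of_le one_pos ha
  set r : ℝ := a / Real.sqrt u₀ with hr
  have hr0 : 0 ≤ r := by positivity
  have hsum : ∀ d : ℕ, ∑ j ∈ Finset.range d, a ^ (j + 1) * u₀ ^ (-(j : ℝ) / 2)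
      = a * ∑ j ∈ Finset.range d, r ^ j := by
    intro d
    rw [Finset.mul_sum]
    refine Finset.sum_congr rfl fun j _ => ?_
    have h1 : u₀ ^ (-(j : ℝ) / 2) = ((Real.sqrt u₀) ^ j)⁻¹ := by
      have h2 : (Real.sqrt u₀) ^ j = u₀ ^ ((j : ℝ) / 2) := by
        rw [Real.sqrt_eq_rpow, ← Real.rpow_natCast (u₀ ^ ((1:ℝ)/2)) j,
          ← Real.rpow_mul hu0.le]
        ring_nf
      rw [h2, ← Real.rpow_neg hu0.le, neg_div]
    rw [h1, hr, div_pow, pow_succ]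
    field_simp
  have main : ∀ d m, 1 ≤ m → m ≤ Kmax → Kmax - m = d →
      Real.sqrt (K (est Kmax) (est m)) ≤
        Real.sqrt (z / Nn m) * (a * ∑ j ∈ Finset.range d, r ^ j) := by
    intro d
    induction d with
    | zero =>
      intro m hm1 hmK hd
      have : m = Kmax := by omega
      subst this
      simp [hKself]
    | succ d ih =>
      intro m hm1 hmK hd
      have hm1K : m + 1 ≤ Kmax := by omega
      have hstep := hrec (m+1) (by omega) hm1K
      have hNm := hNpos m hm1 hmK
      have hNm1 := hNpos (m+1) (by omega) hm1K
      have hrat := hratio (m+1) (by omega) hm1K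
      simp only [Nat.add_sub_cancel] at hstep hrat
      have h1 : Real.sqrt (K (est (m+1)) (est m)) ≤ Real.sqrt (z / Nn (m+1)) := by
        apply Real.sqrt_le_sqrt
        rw [le_div_iff₀ hNm1]
        linarith
      have h2 := ih (m+1) (by omega) hm1K (by omega)
      have htr := htri (est Kmax) (est (m+1)) (est m)
      have hNge : Nn m * u₀ ≤ Nn (m+1) := by
        rw [le_div_iff₀ hNm] at hrat
        linarith
      have h3 : Real.sqrt (z / Nn (m+1)) ≤ Real.sqrt (z / Nn m) * (Real.sqrt u₀)⁻¹ := by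
        rw [← Real.sqrt_inv, ← Real.sqrt_mul (by positivity)]
        apply Real.sqrt_le_sqrt
        rw [show z / Nn m * u₀⁻¹ = z / (Nn m * u₀) by field_simp]
        gcongr
      have hS0 : 0 ≤ ∑ j ∈ Finset.range d, r ^ j :=
        Finset.sum_nonneg fun j _ => pow_nonneg hr0 j
      have hsq0 : 0 ≤ Real.sqrt (z / Nn m) := Real.sqrt_nonneg _
      have hinv1 : (Real.sqrt u₀)⁻¹ ≤ 1 := by
        rw [inv_le_one_iff₀]; right; exact hsu.le
      rw [geom_sum_succ]
      have key : Real.sqrt (K (est Kmax) (est (m+1))) + Real.sqrt (K (est (m+1)) (est m))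
          ≤ Real.sqrt (z / Nn m) * (r * ∑ j ∈ Finset.range d, r ^ j + 1) := by
        have hA : Real.sqrt (K (est Kmax) (est (m+1))) ≤
            Real.sqrt (z / Nn m) * (Real.sqrt u₀)⁻¹ * (a * ∑ j ∈ Finset.range d, r ^ j) :=
          h2.trans (mul_le_mul_of_nonneg_right h3 (by positivity))
        have hB := h1.trans h3
        have hra : Real.sqrt (z / Nn m) * (Real.sqrt u₀)⁻¹ * (a * ∑ j ∈ Finset.range d, r ^ j)
            = Real.sqrt (z / Nn m) * (r * ∑ j ∈ Finset.range d, r ^ j) := by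
          rw [hr]; ring
        have hrb : Real.sqrt (z / Nn m) * (Real.sqrt u₀)⁻¹ ≤ Real.sqrt (z / Nn m) * 1 :=
          mul_le_mul_of_nonneg_left hinv1 hsq0
        rw [hra] at hA
        nlinarith
      calc Real.sqrt (K (est Kmax) (est m))
          ≤ a * (Real.sqrt (K (est Kmax) (est (m+1))) + Real.sqrt (K (est (m+1)) (est m))) := htr
        _ ≤ a * (Real.sqrt (z / Nn m) * (r * ∑ j ∈ Finset.range d, r ^ j + 1)) :=
            mul_le_mul_of_nonneg_left key ha0.le
        _ = Real.sqrt (z / Nn m) * (a * (r * ∑ j ∈ Finset.range d, r ^ j + 1)) := by ring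
  intro m hm1 hmK
  have hmain := main (Kmax - m) m hm1 hmK rfl
  have hNm := hNpos m hm1 hmK
  refine ⟨by rw [hsum]; exact hmain, fun har => ?_⟩
  have hrlt : r < 1 := by
    rw [hr, div_lt_one hsu0]; exact har
  have h1r : (0:ℝ) < 1 - r := by linarith
  have hgeom : ∑ j ∈ Finset.range (Kmax - m), r ^ j ≤ (1 - r)⁻¹ := by
    rw [geom_sum_eq hrlt.ne,
      show (r ^ (Kmax - m) - 1) / (r - 1) = (1 - r ^ (Kmax - m)) / (1 - r) by
        rw [← neg_sub (1:ℝ) (r ^ (Kmax - m)), ← neg_sub (1:ℝ) r, neg_div_neg_eq],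
      ← one_div]
    gcongr
    have := pow_nonneg hr0 (Kmax - m); linarith
  have hbound : Real.sqrt (K (est Kmax) (est m)) ≤
      Real.sqrt (z / Nn m) * (a * (1 - r)⁻¹) := by
    refine hmain.trans ?_
    apply mul_le_mul_of_nonneg_left _ (Real.sqrt_nonneg _)
    exact mul_le_mul_of_nonneg_left hgeom ha0.le
  have hK : K (est Kmax) (est m) ≤ (z / Nn m) * (a * (1 - r)⁻¹) ^ 2 := by
    have := mul_self_le_mul_self (Real.sqrt_nonneg (K (est Kmax) (est m))) hbound
    rw [Real.mul_self_sqrt (hKnn _ _)] at this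
    calc K (est Kmax) (est m) ≤
        (Real.sqrt (z / Nn m) * (a * (1 - r)⁻¹)) *
        (Real.sqrt (z / Nn m) * (a * (1 - r)⁻¹)) := this
      _ = (Real.sqrt (z / Nn m) * Real.sqrt (z / Nn m)) * (a * (1 - r)⁻¹) ^ 2 := by ring
      _ = (z / Nn m) * (a * (1 - r)⁻¹) ^ 2 := by
          rw [Real.mul_self_sqrt (div_nonneg hz hNm.le)]
  calc Nn m * K (est Kmax) (est m) ≤ Nn m * ((z / Nn m) * (a * (1 - r)⁻¹) ^ 2) :=
        mul_le_mul_of_nonneg_left hK hNm.le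
    _ = z * a ^ 2 / (1 - r) ^ 2 := by
        field_simp
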